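/- Let n be a natural number, let E = EuclideanSpace ℝ (Fin n), and let P : E → ℝ≥0 be a submetry, where ℝ≥0 carries the metric dist a b = |a − b|. Set L = P ⁻¹' {0}. Then: (i) for every x ∈ E, (P x : ℝ) = Metric.infDist x L, i.e. P is the distance function to its zero fiber; (ii) the function x ↦ (P x : ℝ) is convex on E (ConvexOn ℝ Set.univ); and (iii) the set L is convex (Convex ℝ L). -/

import Mathlib

/-!
A submetry `P` onto `[0, ∞)` is 1-Lipschitz and lifts every short path of values, so `P x` is
the distance from `x` to the zero fiber `L`. If `L` were not convex, some `x = s a + t b` with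
`a, b ∈ L` would have `d = P x > 0`. Lifting the value `d + m` gives `y` with `‖y - x‖ < m + d/2`
while `y` stays at distance `≥ d + m` from `a` and `b`. With `m = s t ‖a - b‖² / d` this
contradicts the Euclidean identity `s ‖y - a‖² + t ‖y - b‖² = ‖y - x‖² + s t ‖a - b‖²`.
Convexity of `P` then follows because the distance function to a convex set is convex.
-/

open Metric NNReal

/-- A map `P : X → Y` between metric spaces is a submetry if it maps every open
ball onto the open ball of the same radius around the image of the center. -/
def IsSubmetry {X Y : Type*} [MetricSpace X] [MetricSpace Y] (P : X → Y) : Prop :=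
  ∀ (x : X) (r : ℝ), 0 < r → P '' Metric.ball x r = Metric.ball (P x) r

namespace IsSubmetry

section MetricSpace

variable {X Y : Type*} [MetricSpace X] [MetricSpace Y] {P : X → Y}

theorem exists_dist_lt (hP : IsSubmetry P) {x : X} {b : Y} {r : ℝ} (h : dist (P x) b < r) :
    ∃ y, P y = b ∧ dist x y < r := by
  have hb : b ∈ P '' ball x r := by
    rw [hP x r (dist_nonneg.trans_lt h)]
    rwa [mem_ball, dist_comm]
  obtain ⟨y, hy, rfl⟩ := hb
  exact ⟨y, rfl, by rwa [mem_ball, dist_comm] at hy⟩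

theorem dist_le (hP : IsSubmetry P) (x y : X) : dist (P x) (P y) ≤ dist x y := by
  refine le_of_forall_gt fun r hr => ?_
  have hy : P y ∈ P '' ball x r := Set.mem_image_of_mem P (by rwa [mem_ball, dist_comm])
  rw [hP x r (dist_nonneg.trans_lt hr)] at hy
  rwa [mem_ball, dist_comm] at hy

end MetricSpace

section NNReal

variable {X : Type*} [MetricSpace X] {P : X → ℝ≥0}

theorem coe_le_dist_of_apply_eq_zero (hP : IsSubmetry P) (x : X) {z : X} (hz : P z = 0) :
    (P x : ℝ) ≤ dist x z := by
  simpa [hz, NNReal.dist_eq] using hP.dist_le x z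

theorem exists_apply_eq_add_dist_lt (hP : IsSubmetry P) (x : X) {R δ : ℝ} (hR : 0 ≤ R)
    (hδ : 0 < δ) : ∃ y, (P y : ℝ) = P x + R ∧ dist x y < R + δ := by
  obtain ⟨y, hy, hxy⟩ := hP.exists_dist_lt (x := x) (b := P x + R.toNNReal) (r := R + δ)
    (by simpa [NNReal.dist_eq, hR, abs_of_nonneg hR] using hδ)
  exact ⟨y, by rw [hy, NNReal.coe_add, Real.coe_toNNReal R hR], hxy⟩

theorem coe_eq_infDist (hP : IsSubmetry P) (x : X) : (P x : ℝ) = infDist x (P ⁻¹' {0}) := by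
  have hlift : ∀ ε > 0, ∃ z, P z = 0 ∧ dist x z < P x + ε := fun ε hε =>
    hP.exists_dist_lt (by simpa [NNReal.dist_eq] using hε)
  obtain ⟨z₀, hz₀, -⟩ := hlift 1 one_pos
  refine le_antisymm ((le_infDist ⟨z₀, hz₀⟩).2 fun z hz => ?_) ?_
  · exact hP.coe_le_dist_of_apply_eq_zero x hz
  · refine le_of_forall_pos_le_add fun ε hε => ?_
    obtain ⟨z, hz, hxz⟩ := hlift ε hε
    exact (infDist_le_dist_of_mem (s := P ⁻¹' {0}) hz).trans hxz.le

end NNReal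

end IsSubmetry

section InnerProductSpace

variable {E : Type*} [NormedAddCommGroup E] [InnerProductSpace ℝ E]

theorem norm_sub_combo_sq_add (y a b : E) {s t : ℝ} (hst : s + t = 1) :
    s * ‖y - a‖ ^ 2 + t * ‖y - b‖ ^ 2 = ‖y - (s • a + t • b)‖ ^ 2 + s * t * ‖a - b‖ ^ 2 := by
  obtain rfl : s = 1 - t := by linarith
  have ha : y - a = (y - ((1 - t) • a + t • b)) - t • (a - b) := by module
  have hb : y - b = (y - ((1 - t) • a + t • b)) + (1 - t) • (a - b) := by module
  rw [ha, hb, norm_sub_sq_real, norm_add_sq_real, real_inner_smul_right, real_inner_smul_right,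
    norm_smul, norm_smul, Real.norm_eq_abs, Real.norm_eq_abs, mul_pow, mul_pow, sq_abs, sq_abs]
  ring

theorem IsSubmetry.convex_preimage_zero {P : E → ℝ≥0} (hP : IsSubmetry P) :
    Convex ℝ (P ⁻¹' {0}) := by
  intro a ha b hb s t hs ht hst
  set x := s • a + t • b
  by_contra hx
  have hd : 0 < (P x : ℝ) := NNReal.coe_pos.2 (pos_iff_ne_zero.2 hx)
  set d : ℝ := (P x : ℝ)
  set K := s * t * ‖a - b‖ ^ 2
  set m := K / d
  have hdm : d * m = K := mul_div_cancel₀ K hd.ne'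
  obtain ⟨y, hy, hxy⟩ :=
    hP.exists_apply_eq_add_dist_lt x (R := m) (by positivity) (half_pos hd)
  have hfar : ∀ z ∈ P ⁻¹' {0}, (d + m) ^ 2 ≤ ‖y - z‖ ^ 2 := fun z hz => by
    rw [← dist_eq_norm, ← hy]
    gcongr
    exact hP.coe_le_dist_of_apply_eq_zero y hz
  have hnear : ‖y - x‖ ^ 2 < (m + d / 2) ^ 2 := by
    rw [← dist_eq_norm, dist_comm]
    gcongr
  have hsum := norm_sub_combo_sq_add y a b hst
  have hgap : (d + m) ^ 2 = (m + d / 2) ^ 2 + K + 3 / 4 * d ^ 2 := by rw [← hdm]; ring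
  nlinarith [mul_le_mul_of_nonneg_left (hfar a ha) hs, mul_le_mul_of_nonneg_left (hfar b hb) ht]

end InnerProductSpace

theorem Convex.convexOn_infDist {E : Type*} [SeminormedAddCommGroup E] [NormedSpace ℝ E]
    {s : Set E} (hs : Convex ℝ s) : ConvexOn ℝ Set.univ (infDist · s) := by
  refine ⟨convex_univ, fun p _ q _ a b ha hb hab => ?_⟩
  rcases s.eq_empty_or_nonempty with rfl | hne
  · simp
  refine le_of_forall_pos_le_add fun ε hε => ?_
  obtain ⟨zp, hzp, hpz⟩ := (infDist_lt_iff hne).1 (lt_add_of_pos_right (infDist p s) hε)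
  obtain ⟨zq, hzq, hqz⟩ := (infDist_lt_iff hne).1 (lt_add_of_pos_right (infDist q s) hε)
  calc infDist (a • p + b • q) s
      ≤ dist (a • p + b • q) (a • zp + b • zq) := infDist_le_dist_of_mem (hs hzp hzq ha hb hab)
    _ ≤ dist (a • p) (a • zp) + dist (b • q) (b • zq) := dist_add_add_le _ _ _ _
    _ = a * dist p zp + b * dist q zq := by
        rw [dist_smul₀, dist_smul₀, Real.norm_of_nonneg ha, Real.norm_of_nonneg hb]
    _ ≤ a * (infDist p s + ε) + b * (infDist q s + ε) := by gcongr
    _ = a • infDist p s + b • infDist q s + ε := by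
        rw [smul_eq_mul, smul_eq_mul]; linear_combination ε * hab

/-- A submetry from a Euclidean space to `ℝ≥0` is the distance function to its zero
fiber; it is convex, and its zero fiber is a convex set. -/
theorem submetry_to_nnreal_structure (n : ℕ) (P : EuclideanSpace ℝ (Fin n) → NNReal)
    (hP : IsSubmetry P) (L : Set (EuclideanSpace ℝ (Fin n))) (hL : L = P ⁻¹' {0}) :
    (∀ x, (P x : ℝ) = Metric.infDist x L) ∧
      ConvexOn ℝ Set.univ (fun x => (P x : ℝ)) ∧ Convex ℝ L := by
  subst hL
  have hdist : (fun x => (P x : ℝ)) = (infDist · (P ⁻¹' {0})) := funext hP.coe_eq_infDist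
  exact ⟨hP.coe_eq_infDist, hdist ▸ hP.convex_preimage_zero.convexOn_infDist,
    hP.convex_preimage_zero⟩
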